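/- arXiv:0905.1229 — 2 statements merged into one kernel-verified Lean document; each statement's English description precedes it below -/
import Mathlib

section
/- I(z,β) ≪ K^{2An}·min(Pⁿ, |z|^{−n/2}) uniformly in z ∈ ℝ and β ∈ ℝⁿ, the implied constant depending only on F and A. -/
open scoped BigOperators
open MeasureTheory

noncomputable section

/-- `e(t) = exp(2πit)` -/
def eC (t : ℝ) : ℂ := Complex.exp (2 * Real.pi * Complex.I * t)

/-- Euclidean length `|x|` of a vector in `ℝⁿ`. -/
def l2 (n : ℕ) (x : Fin n → ℝ) : ℝ := Real.sqrt (∑ i, x i ^ 2)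

/-- The quadratic form `F(x) = ½ xᵀ𝓕x`. -/
def Qform (n : ℕ) (Fm : Matrix (Fin n) (Fin n) ℤ) (x : Fin n → ℝ) : ℝ :=
  (1 / 2) * ∑ i, ∑ j, (Fm i j : ℝ) * x i * x j

/-- The Gaussian weight `w(x) = π^{-n/2} K^{An} exp(-|x - Px₀|² P^{-2} K^{2A})`, `K = log P`. -/
def gw (n : ℕ) (A P : ℝ) (x₀ x : Fin n → ℝ) : ℝ :=
  Real.pi ^ (-(n : ℝ) / 2) * Real.log P ^ (A * (n : ℝ)) *
    Real.exp (-(∑ i, (x i - P * x₀ i) ^ 2) * P ^ (-2 : ℝ) * Real.log P ^ (2 * A))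

/-- `R_ω(N) = ∑_{x ∈ ℤⁿ, F(x) = N} ω(x)`. -/
def Rcount (n : ℕ) (Fm : Matrix (Fin n) (Fin n) ℤ) (N : ℤ) (ω : (Fin n → ℝ) → ℝ) : ℝ :=
  ∑' x : Fin n → ℤ,
    if Qform n Fm (fun i => (x i : ℝ)) = (N : ℝ) then ω (fun i => (x i : ℝ)) else 0

/-- The complete exponential sum
`S_u(q,b,N) = ∑_{1≤s≤q, (s,q)=1} ∑_{v mod q} e_q(s̄ 𝔔(v,N) + us - b·v)`. -/
def expSum (n : ℕ) (Fm : Matrix (Fin n) (Fin n) ℤ) (N : ℤ) (q : ℕ) (u : ℤ)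
    (b : Fin n → ℤ) : ℂ :=
  ∑ s ∈ (Finset.Icc 1 q).filter (fun s => Nat.Coprime s q),
    ∑ v : Fin n → Fin q,
      eC (((((s : ZMod q)⁻¹).val : ℝ) * (Qform n Fm (fun i => ((v i : ℕ) : ℝ)) - (N : ℝ))
          + (u : ℝ) * (s : ℝ) - ∑ i, (b i : ℝ) * ((v i : ℕ) : ℝ)) / q)

/-- `S(α) = ∑_{x ∈ ℤⁿ} w(x) e(α 𝔔(x,N))`. -/
def Sa (n : ℕ) (Fm : Matrix (Fin n) (Fin n) ℤ) (N : ℤ) (A P : ℝ) (x₀ : Fin n → ℝ)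
    (α : ℝ) : ℂ :=
  ∑' x : Fin n → ℤ,
    (gw n A P x₀ (fun i => (x i : ℝ)) : ℂ) *
      eC (α * (Qform n Fm (fun i => (x i : ℝ)) - (N : ℝ)))

/-- `S_u(q,z) = ∑_{1≤s≤q, (s,q)=1} e_q(us) S(s̄/q + z)`. -/
def Suz (n : ℕ) (Fm : Matrix (Fin n) (Fin n) ℤ) (N : ℤ) (A P : ℝ) (x₀ : Fin n → ℝ)
    (q : ℕ) (u : ℤ) (z : ℝ) : ℂ :=
  ∑ s ∈ (Finset.Icc 1 q).filter (fun s => Nat.Coprime s q),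
    eC ((u : ℝ) * (s : ℝ) / q) * Sa n Fm N A P x₀ ((((s : ZMod q)⁻¹).val : ℝ) / q + z)

/-- `I(z,β) = ∫_{ℝⁿ} w(x) e(z 𝔔(x,N) + β·x) dx`. -/
def Iint (n : ℕ) (Fm : Matrix (Fin n) (Fin n) ℤ) (N : ℤ) (A P : ℝ) (x₀ : Fin n → ℝ)
    (z : ℝ) (β : Fin n → ℝ) : ℂ :=
  ∫ x : Fin n → ℝ, (gw n A P x₀ x : ℂ) * eC (z * (Qform n Fm x - (N : ℝ)) + ∑ i, β i * x i)

/-- The singular integral `I_w(N) = ∫_ℝ I(z,0) dz`. -/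
def Iw (n : ℕ) (Fm : Matrix (Fin n) (Fin n) ℤ) (N : ℤ) (A P : ℝ) (x₀ : Fin n → ℝ) : ℂ :=
  ∫ z : ℝ, Iint n Fm N A P x₀ z 0

/-- The singular series `𝔖(N) = ∑_{q≥1} q^{-n} S_0(q,0)`. -/
def singSeries (n : ℕ) (Fm : Matrix (Fin n) (Fin n) ℤ) (N : ℤ) : ℂ :=
  ∑' q : ℕ, ((q : ℂ) + 1) ^ (-(n : ℤ)) * expSum n Fm N (q + 1) 0 0

/-- The truncation threshold `B₀ = q K^{2+A} (P^{-1} + |z| P)`. -/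
def B0 (A P : ℝ) (q : ℕ) (z : ℝ) : ℝ :=
  (q : ℝ) * Real.log P ^ (2 + A) * (P⁻¹ + |z| * P)

/-- The dilated box `P((1+t)Γ + c)` where `B = Γ + c` is the hyperrectangle whose image
under `Mᵀ` has edges parallel to the coordinate axes, described by centre `c* = Mᵀc`
and half-edge lengths `γ`. -/
def boxSet (n : ℕ) (M : Matrix (Fin n) (Fin n) ℝ) (cstar γ : Fin n → ℝ) (t P : ℝ) :
    Set (Fin n → ℝ) :=
  {x | ∀ i, |M.transpose.mulVec x i - P * cstar i| ≤ P * (1 + t) * γ i}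

/-- The smoothed weight `W_±(x) = ∫_{(1±K^{-A/2})Γ + c} w(x; x₀) dx₀`, with `t = ±K^{-A/2}`. -/
def Wpm (n : ℕ) (M : Matrix (Fin n) (Fin n) ℝ) (cstar γ : Fin n → ℝ) (A P t : ℝ)
    (x : Fin n → ℝ) : ℝ :=
  ∫ x₀ in boxSet n M cstar γ t 1, gw n A P x₀ x

/-- `I_ω(N) = ∫_ℝ ∫_{ℝⁿ} ω(x) e(z(F(x)-N)) dx dz`. -/
def Iom (n : ℕ) (Fm : Matrix (Fin n) (Fin n) ℤ) (N : ℤ) (ω : (Fin n → ℝ) → ℝ) : ℂ :=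
  ∫ z : ℝ, ∫ x : Fin n → ℝ, (ω x : ℂ) * eC (z * (Qform n Fm x - (N : ℝ)))

end


/-!
Write the weight as `w(x) = C_w exp(-α|x - Px₀|²)` with `C_w = π^{-n/2} K^{An}` and
`α = P⁻² K^{2A}`, so that `∫ w = Pⁿ`: this is the trivial bound. For the bound in `z`, van der
Corput differencing gives `|I|² ≤ ∫ |∫ f(x) f̄(x + h) dx| dh` for the integrand `f` of `I`.
Since `F(x + h) - F(x) - F(h) = 𝓕h · x` is linear in `x`, the inner integral is the Fourier
transform of a Gaussian, of size at most `C_w² (π/2α)^{n/2} exp(-π² z² |𝓕h|² / 2α)`. As `𝓕` is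
invertible, `|𝓕h|² ≥ σ|h|²`, and integrating over `h` gives `|I|² ≤ C_w² (σz²)^{-n/2}`,
whatever `α` is.
-/

open ComplexConjugate Matrix

lemma norm_eC (t : ℝ) : ‖eC t‖ = 1 := by
  rw [eC, Complex.norm_exp]
  simp

lemma eC_add (s t : ℝ) : eC (s + t) = eC s * eC t := by
  rw [eC, eC, eC, ← Complex.exp_add]
  push_cast
  ring_nf

lemma conj_eC (t : ℝ) : conj (eC t) = eC (-t) := by
  rw [eC, eC, ← Complex.exp_conj]
  simp only [map_mul, map_ofNat, Complex.conj_I, Complex.conj_ofReal]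
  push_cast
  ring_nf

@[fun_prop]
lemma continuous_eC : Continuous eC := by
  unfold eC
  fun_prop

section Gaussian

variable {ι : Type*} [Fintype ι]

lemma integrable_exp_neg_mul_sum_sub_sq {a : ℝ} (ha : 0 < a) (m : ι → ℝ) :
    Integrable fun x : ι → ℝ => Real.exp (-a * ∑ i, (x i - m i) ^ 2) := by
  simp_rw [Finset.mul_sum, Real.exp_sum]
  exact Integrable.fintype_prod fun i => (integrable_exp_neg_mul_sq ha).comp_sub_right (m i)

lemma norm_integral_gaussian_mul_eC {a : ℝ} (ha : 0 < a) (m ξ : ι → ℝ) :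
    ‖∫ x : ι → ℝ, (Real.exp (-a * ∑ i, (x i - m i) ^ 2) : ℂ) * eC (∑ i, ξ i * x i)‖
      = (Real.pi / a) ^ ((Fintype.card ι : ℝ) / 2)
          * Real.exp (-(Real.pi ^ 2 * ∑ i, ξ i ^ 2) / a) := by
  rw [← integral_add_right_eq_self _ m]
  have hx : ∀ x : ι → ℝ,
      (Real.exp (-a * ∑ i, ((x + m) i - m i) ^ 2) : ℂ) * eC (∑ i, ξ i * (x + m) i)
        = eC (∑ i, ξ i * m i) * Complex.exp (-a * ∑ i, (x i : ℂ) ^ 2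
            + ∑ i, (2 * Real.pi * Complex.I * ξ i) * x i) := by
    intro x
    simp only [Pi.add_apply, add_sub_cancel_right, mul_add, Finset.sum_add_distrib, eC_add]
    rw [eC, eC, Complex.ofReal_exp, ← Complex.exp_add, ← Complex.exp_add, ← Complex.exp_add]
    push_cast
    simp only [Finset.mul_sum]
    ring_nf
  simp_rw [hx]
  have hpow : ((Real.pi : ℂ) / a) ^ ((Fintype.card ι : ℂ) / 2)
      = ((Real.pi / a : ℝ) : ℂ) ^ (((Fintype.card ι : ℝ) / 2 : ℝ) : ℂ) := by
    push_cast
    rfl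
  have hexp : (∑ i, (2 * Real.pi * Complex.I * ξ i) ^ 2) / (4 * a)
      = ((-(Real.pi ^ 2 * ∑ i, ξ i ^ 2) / a : ℝ) : ℂ) := by
    have ha' : (a : ℂ) ≠ 0 := by exact_mod_cast ha.ne'
    push_cast
    simp only [mul_pow, Complex.I_sq, Finset.mul_sum, Finset.sum_div, ← Finset.sum_neg_distrib]
    refine Finset.sum_congr rfl fun i _ => ?_
    field_simp
    ring
  rw [integral_const_mul, GaussianFourier.integral_cexp_neg_mul_sum_add (by simpa using ha),
    norm_mul, norm_eC, one_mul, norm_mul, Complex.norm_exp, hpow, hexp,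
    Complex.norm_cpow_eq_rpow_re_of_pos (by positivity), Complex.ofReal_re, Complex.ofReal_re]

lemma integral_exp_neg_mul_sum_sub_sq {a : ℝ} (ha : 0 < a) (m : ι → ℝ) :
    ∫ x : ι → ℝ, Real.exp (-a * ∑ i, (x i - m i) ^ 2)
      = (Real.pi / a) ^ ((Fintype.card ι : ℝ) / 2) := by
  have h := norm_integral_gaussian_mul_eC ha m 0
  simp only [Pi.zero_apply, zero_mul, Finset.sum_const_zero, eC, Complex.ofReal_zero, mul_zero,
    Complex.exp_zero, mul_one, zero_pow two_ne_zero, neg_zero, zero_div, Real.exp_zero] at h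
  rwa [integral_complex_ofReal, Complex.norm_real, Real.norm_of_nonneg
    (integral_nonneg fun _ => (Real.exp_pos _).le)] at h

lemma exp_sum_sub_sq_mul_exp_sum_add_sub_sq (a : ℝ) (c x h : ι → ℝ) :
    Real.exp (-a * ∑ i, (x i - c i) ^ 2) * Real.exp (-a * ∑ i, ((x + h) i - c i) ^ 2)
      = Real.exp (-(a / 2) * ∑ i, h i ^ 2)
          * Real.exp (-(2 * a) * ∑ i, (x i - (c i - h i / 2)) ^ 2) := by
  rw [← Real.exp_add, ← Real.exp_add]
  simp only [Finset.mul_sum, ← Finset.sum_add_distrib, Pi.add_apply]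
  exact congrArg Real.exp (Finset.sum_congr rfl fun i _ => by ring)

end Gaussian

section Differencing

variable {E : Type*} [NormedAddCommGroup E] [MeasurableSpace E] [BorelSpace E]
  [SecondCountableTopology E] {μ : Measure E} [SFinite μ] [μ.IsAddLeftInvariant]

theorem sq_norm_integral_le_integral_norm_integral_mul_conj_add {f : E → ℂ} (hf : Continuous f)
    (hfi : Integrable f μ) :
    ‖∫ x, f x ∂μ‖ ^ 2 ≤ ∫ h, ‖∫ x, f x * conj (f (x + h)) ∂μ‖ ∂μ := by
  have hconj : Integrable (fun x => conj (f x)) μ :=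
    hfi.norm.mono' (by fun_prop : Continuous fun x => conj (f x)).aestronglyMeasurable
      (.of_forall fun x => by simp)
  have hprod : Integrable (Function.uncurry fun x h => f x * conj (f (x + h))) (μ.prod μ) := by
    refine (integrable_prod_iff (by fun_prop : Continuous
      (Function.uncurry fun x h => f x * conj (f (x + h)))).aestronglyMeasurable).2
      ⟨.of_forall fun x => (hconj.comp_add_left x).const_mul (f x), ?_⟩
    simp only [Function.uncurry_apply_pair, norm_mul, RCLike.norm_conj, integral_const_mul,
      integral_add_left_eq_self (fun y => ‖f y‖)]
    exact hfi.norm.mul_const _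
  have hsq : (∫ x, f x ∂μ) * conj (∫ x, f x ∂μ) = ∫ x, ∫ h, f x * conj (f (x + h)) ∂μ ∂μ := by
    rw [← integral_conj, ← integral_mul_const]
    congr 1 with x
    rw [← integral_const_mul, integral_add_left_eq_self (fun y => f x * conj (f y))]
  calc ‖∫ x, f x ∂μ‖ ^ 2 = ‖(∫ x, f x ∂μ) * conj (∫ x, f x ∂μ)‖ := by
        rw [norm_mul, RCLike.norm_conj, sq]
    _ = ‖∫ h, ∫ x, f x * conj (f (x + h)) ∂μ ∂μ‖ := by rw [hsq, integral_integral_swap hprod]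
    _ ≤ _ := norm_integral_le_integral_norm _

end Differencing

theorem Qform_add {n : ℕ} {Fm : Matrix (Fin n) (Fin n) ℤ} (hsym : ∀ i j, Fm i j = Fm j i)
    (x h : Fin n → ℝ) :
    Qform n Fm (x + h) = Qform n Fm x + ∑ i, (∑ j, (Fm i j : ℝ) * h j) * x i + Qform n Fm h := by
  have hswap : ∑ i, ∑ j, (Fm i j : ℝ) * h i * x j = ∑ i, ∑ j, (Fm i j : ℝ) * x i * h j := by
    rw [Finset.sum_comm]
    simp_rw [hsym]
    refine Finset.sum_congr rfl fun i _ => Finset.sum_congr rfl fun j _ => by ring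
  have hmid : ∑ i, (∑ j, (Fm i j : ℝ) * h j) * x i = ∑ i, ∑ j, (Fm i j : ℝ) * x i * h j := by
    simp only [Finset.sum_mul]
    refine Finset.sum_congr rfl fun i _ => Finset.sum_congr rfl fun j _ => by ring
  simp only [Qform, Pi.add_apply, mul_add, add_mul, Finset.sum_add_distrib, hswap, hmid]
  ring

theorem exists_pos_mul_sum_sq_le_sum_mulVec_sq {ι : Type*} [Fintype ι] [DecidableEq ι]
    {M : Matrix ι ι ℝ} (hM : M.det ≠ 0) :
    ∃ σ > (0 : ℝ), ∀ h : ι → ℝ, σ * ∑ i, h i ^ 2 ≤ ∑ i, (M *ᵥ h) i ^ 2 := by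
  set T := ∑ i, ∑ j, M⁻¹ i j ^ 2 + 1
  refine ⟨T⁻¹, by positivity, fun h => ?_⟩
  have hinv : M⁻¹ *ᵥ (M *ᵥ h) = h := by
    rw [mulVec_mulVec, nonsing_inv_mul M (isUnit_iff_ne_zero.mpr hM), one_mulVec]
  have hcs : ∀ i, h i ^ 2 ≤ (∑ j, M⁻¹ i j ^ 2) * ∑ j, (M *ᵥ h) j ^ 2 := fun i => by
    conv_lhs => rw [← hinv]
    exact Finset.sum_mul_sq_le_sq_mul_sq _ _ _
  rw [inv_mul_le_iff₀ (by positivity)]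
  have hnonneg : 0 ≤ ∑ j, (M *ᵥ h) j ^ 2 := by positivity
  calc ∑ i, h i ^ 2 ≤ ∑ i, (∑ j, M⁻¹ i j ^ 2) * ∑ j, (M *ᵥ h) j ^ 2 :=
        Finset.sum_le_sum fun i _ => hcs i
    _ = (T - 1) * ∑ j, (M *ᵥ h) j ^ 2 := by rw [← Finset.sum_mul]; ring
    _ ≤ T * ∑ j, (M *ᵥ h) j ^ 2 := by nlinarith

section GaussianChirp

variable {n : ℕ} {Fm : Matrix (Fin n) (Fin n) ℤ}

noncomputable def gaussianChirp (n : ℕ) (Fm : Matrix (Fin n) (Fin n) ℤ) (a : ℝ)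
    (c : Fin n → ℝ) (N z : ℝ) (β x : Fin n → ℝ) : ℂ :=
  (Real.exp (-a * ∑ i, (x i - c i) ^ 2) : ℂ) * eC (z * (Qform n Fm x - N) + ∑ i, β i * x i)

lemma continuous_gaussianChirp (a : ℝ) (c : Fin n → ℝ) (N z : ℝ) (β : Fin n → ℝ) :
    Continuous (gaussianChirp n Fm a c N z β) := by
  unfold gaussianChirp Qform
  fun_prop

lemma norm_gaussianChirp (a : ℝ) (c : Fin n → ℝ) (N z : ℝ) (β x : Fin n → ℝ) :
    ‖gaussianChirp n Fm a c N z β x‖ = Real.exp (-a * ∑ i, (x i - c i) ^ 2) := by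
  rw [gaussianChirp, norm_mul, norm_eC, mul_one, Complex.norm_real, Real.norm_of_nonneg
    (Real.exp_pos _).le]

lemma integrable_gaussianChirp {a : ℝ} (ha : 0 < a) (c : Fin n → ℝ) (N z : ℝ) (β : Fin n → ℝ) :
    Integrable (gaussianChirp n Fm a c N z β) :=
  (integrable_exp_neg_mul_sum_sub_sq ha c).mono'
    (continuous_gaussianChirp a c N z β).aestronglyMeasurable
    (.of_forall fun x => (norm_gaussianChirp a c N z β x).le)

lemma gaussianChirp_mul_conj_add (hsym : ∀ i j, Fm i j = Fm j i) (a : ℝ) (c : Fin n → ℝ)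
    (N z : ℝ) (β x h : Fin n → ℝ) :
    gaussianChirp n Fm a c N z β x * conj (gaussianChirp n Fm a c N z β (x + h))
      = (Real.exp (-(a / 2) * ∑ i, h i ^ 2) : ℂ) * eC (-(z * Qform n Fm h + ∑ i, β i * h i))
        * ((Real.exp (-(2 * a) * ∑ i, (x i - (c i - h i / 2)) ^ 2) : ℂ)
          * eC (∑ i, (-z * ∑ j, (Fm i j : ℝ) * h j) * x i)) := by
  have hphase : z * (Qform n Fm x - N) + ∑ i, β i * x i
      + -(z * (Qform n Fm (x + h) - N) + ∑ i, β i * (x + h) i)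
      = -(z * Qform n Fm h + ∑ i, β i * h i) + ∑ i, (-z * ∑ j, (Fm i j : ℝ) * h j) * x i := by
    simp only [Qform_add hsym, Pi.add_apply, mul_add, Finset.sum_add_distrib, mul_assoc,
      ← Finset.mul_sum]
    ring
  simp only [gaussianChirp, map_mul, Complex.conj_ofReal, conj_eC]
  calc _ = ((Real.exp (-a * ∑ i, (x i - c i) ^ 2) * Real.exp (-a * ∑ i, ((x + h) i - c i) ^ 2)
        : ℝ) : ℂ) * (eC (z * (Qform n Fm x - N) + ∑ i, β i * x i)
          * eC (-(z * (Qform n Fm (x + h) - N) + ∑ i, β i * (x + h) i))) := by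
        push_cast
        ring
    _ = _ := by
        rw [← eC_add, hphase, eC_add, exp_sum_sub_sq_mul_exp_sum_add_sub_sq]
        push_cast
        ring

lemma norm_integral_gaussianChirp_mul_conj_add_le (hsym : ∀ i j, Fm i j = Fm j i) {σ : ℝ}
    (hσ : ∀ h : Fin n → ℝ, σ * ∑ i, h i ^ 2 ≤ ∑ i, (∑ j, (Fm i j : ℝ) * h j) ^ 2)
    {a : ℝ} (ha : 0 < a) (c : Fin n → ℝ) (N z : ℝ) (β h : Fin n → ℝ) :
    ‖∫ x, gaussianChirp n Fm a c N z β x * conj (gaussianChirp n Fm a c N z β (x + h))‖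
      ≤ (Real.pi / (2 * a)) ^ ((n : ℝ) / 2)
          * Real.exp (-(Real.pi ^ 2 * σ * z ^ 2 / (2 * a)) * ∑ i, h i ^ 2) := by
  simp_rw [gaussianChirp_mul_conj_add hsym]
  rw [integral_const_mul, norm_mul, norm_mul, norm_eC, mul_one, Complex.norm_real,
    Real.norm_of_nonneg (Real.exp_pos _).le, norm_integral_gaussian_mul_eC (by positivity),
    Fintype.card_fin]
  have hdamp : Real.exp (-(a / 2) * ∑ i, h i ^ 2) ≤ 1 := by
    rw [Real.exp_le_one_iff, neg_mul]
    exact neg_nonpos.2 (by positivity)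
  have hdecay : Real.exp (-(Real.pi ^ 2 * ∑ i, (-z * ∑ j, (Fm i j : ℝ) * h j) ^ 2) / (2 * a))
      ≤ Real.exp (-(Real.pi ^ 2 * σ * z ^ 2 / (2 * a)) * ∑ i, h i ^ 2) := by
    have hz : ∑ i, (-z * ∑ j, (Fm i j : ℝ) * h j) ^ 2
        = z ^ 2 * ∑ i, (∑ j, (Fm i j : ℝ) * h j) ^ 2 := by
      rw [Finset.mul_sum]
      exact Finset.sum_congr rfl fun i _ => by ring
    rw [Real.exp_le_exp, hz, neg_mul, neg_div, neg_le_neg_iff, div_mul_eq_mul_div,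
      div_le_div_iff_of_pos_right (by positivity)]
    have := mul_le_mul_of_nonneg_left (hσ h) (by positivity : 0 ≤ Real.pi ^ 2 * z ^ 2)
    linarith
  calc _ ≤ 1 * ((Real.pi / (2 * a)) ^ ((n : ℝ) / 2)
        * Real.exp (-(Real.pi ^ 2 * σ * z ^ 2 / (2 * a)) * ∑ i, h i ^ 2)) := by gcongr
    _ = _ := one_mul _

theorem norm_integral_gaussianChirp_le (hsym : ∀ i j, Fm i j = Fm j i) {σ : ℝ} (hσ0 : 0 < σ)
    (hσ : ∀ h : Fin n → ℝ, σ * ∑ i, h i ^ 2 ≤ ∑ i, (∑ j, (Fm i j : ℝ) * h j) ^ 2)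
    {a : ℝ} (ha : 0 < a) (c : Fin n → ℝ) (N : ℝ) (β : Fin n → ℝ) {z : ℝ} (hz : z ≠ 0) :
    ‖∫ x, gaussianChirp n Fm a c N z β x‖ ≤ (σ * z ^ 2) ^ (-(n : ℝ) / 4) := by
  set b := Real.pi ^ 2 * σ * z ^ 2 / (2 * a)
  have hb : 0 < b := by positivity
  have hint := integrable_exp_neg_mul_sum_sub_sq hb (0 : Fin n → ℝ)
  have hmass := integral_exp_neg_mul_sum_sub_sq hb (0 : Fin n → ℝ)
  simp only [Pi.zero_apply, sub_zero, Fintype.card_fin] at hint hmass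
  have hsq : ‖∫ x, gaussianChirp n Fm a c N z β x‖ ^ 2 ≤ (σ * z ^ 2) ^ (-(n : ℝ) / 2) :=
    calc ‖∫ x, gaussianChirp n Fm a c N z β x‖ ^ 2
        ≤ ∫ h, ‖∫ x, gaussianChirp n Fm a c N z β x
            * conj (gaussianChirp n Fm a c N z β (x + h))‖ :=
          sq_norm_integral_le_integral_norm_integral_mul_conj_add
            (continuous_gaussianChirp a c N z β) (integrable_gaussianChirp ha c N z β)
      _ ≤ ∫ h : Fin n → ℝ,
            (Real.pi / (2 * a)) ^ ((n : ℝ) / 2) * Real.exp (-b * ∑ i, h i ^ 2) := by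
          refine integral_mono_of_nonneg (.of_forall fun _ => norm_nonneg _) ?_
            (.of_forall (norm_integral_gaussianChirp_mul_conj_add_le hsym hσ ha c N z β))
          exact hint.const_mul _
      _ = (Real.pi / (2 * a) * (Real.pi / b)) ^ ((n : ℝ) / 2) := by
          rw [integral_const_mul, hmass, Real.mul_rpow (by positivity) (by positivity)]
      _ = (σ * z ^ 2) ^ (-(n : ℝ) / 2) := by
          rw [neg_div, Real.rpow_neg (by positivity), ← Real.inv_rpow (by positivity)]
          congr 1
          simp only [b]
          field_simp
  have hroot : ((σ * z ^ 2) ^ (-(n : ℝ) / 4)) ^ 2 = (σ * z ^ 2) ^ (-(n : ℝ) / 2) := by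
    rw [← Real.rpow_natCast, ← Real.rpow_mul (by positivity)]
    ring_nf
  exact (pow_le_pow_iff_left₀ (norm_nonneg _) (by positivity) two_ne_zero).1 (hroot ▸ hsq)

end GaussianChirp

lemma one_le_inv_rpow_mul_rpow {b x t : ℝ} (hb : 0 < b) (hbx : b ≤ x) (ht : 0 ≤ t) :
    1 ≤ (b ^ t)⁻¹ * x ^ t :=
  (one_le_inv_mul₀ (by positivity)).2 (Real.rpow_le_rpow hb.le hbx ht)

section Weight

variable {n : ℕ} {A P : ℝ}

lemma gw_eq (x₀ x : Fin n → ℝ) :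
    gw n A P x₀ x = Real.pi ^ (-(n : ℝ) / 2) * Real.log P ^ (A * n)
      * Real.exp (-(P ^ (-2 : ℝ) * Real.log P ^ (2 * A)) * ∑ i, (x i - P * x₀ i) ^ 2) := by
  rw [gw]
  congr 2
  ring

lemma integral_gw (hP : 1 < P) (x₀ : Fin n → ℝ) : ∫ x, gw n A P x₀ x = P ^ (n : ℝ) := by
  have hK := Real.log_pos hP
  have hP0 : 0 < P := by linarith
  simp_rw [gw_eq]
  rw [integral_const_mul, integral_exp_neg_mul_sum_sub_sq (by positivity) (fun i => P * x₀ i),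
    Fintype.card_fin, Real.div_rpow Real.pi_pos.le (by positivity),
    Real.mul_rpow (by positivity) (by positivity), ← Real.rpow_mul hP0.le,
    ← Real.rpow_mul hK.le, neg_div, Real.rpow_neg Real.pi_pos.le]
  have hPn : P ^ (-2 * ((n : ℝ) / 2)) = (P ^ (n : ℝ))⁻¹ := by
    rw [← Real.rpow_neg hP0.le]
    ring_nf
  have hKn : Real.log P ^ (2 * A * ((n : ℝ) / 2)) = Real.log P ^ (A * n) := by ring_nf
  rw [hPn, hKn]
  field_simp

lemma norm_Iint_le_rpow (hP : 1 < P) (Fm : Matrix (Fin n) (Fin n) ℤ) (N : ℤ) (x₀ : Fin n → ℝ)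
    (z : ℝ) (β : Fin n → ℝ) : ‖Iint n Fm N A P x₀ z β‖ ≤ P ^ (n : ℝ) := by
  have hgw : ∀ x, 0 ≤ gw n A P x₀ x := fun x => by
    rw [gw_eq]
    have := Real.log_pos hP
    positivity
  calc ‖Iint n Fm N A P x₀ z β‖ ≤ ∫ x, ‖(gw n A P x₀ x : ℂ)
        * eC (z * (Qform n Fm x - N) + ∑ i, β i * x i)‖ := norm_integral_le_integral_norm _
    _ = P ^ (n : ℝ) := by
        simp_rw [norm_mul, norm_eC, mul_one, Complex.norm_real, Real.norm_of_nonneg (hgw _)]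
        exact integral_gw hP x₀

lemma Iint_eq_mul_integral_gaussianChirp (Fm : Matrix (Fin n) (Fin n) ℤ) (N : ℤ)
    (x₀ : Fin n → ℝ) (z : ℝ) (β : Fin n → ℝ) :
    Iint n Fm N A P x₀ z β = ((Real.pi ^ (-(n : ℝ) / 2) * Real.log P ^ (A * n) : ℝ) : ℂ)
      * ∫ x, gaussianChirp n Fm (P ^ (-2 : ℝ) * Real.log P ^ (2 * A)) (fun i => P * x₀ i)
          N z β x := by
  rw [Iint, ← integral_const_mul]
  congr 1 with x
  rw [gw_eq, gaussianChirp]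
  push_cast
  ring

lemma norm_Iint_le_abs_rpow (hP : 1 < P) {Fm : Matrix (Fin n) (Fin n) ℤ}
    (hsym : ∀ i j, Fm i j = Fm j i) {σ : ℝ} (hσ0 : 0 < σ)
    (hσ : ∀ h : Fin n → ℝ, σ * ∑ i, h i ^ 2 ≤ ∑ i, (∑ j, (Fm i j : ℝ) * h j) ^ 2)
    (N : ℤ) (x₀ : Fin n → ℝ) {z : ℝ} (hz : z ≠ 0) (β : Fin n → ℝ) :
    ‖Iint n Fm N A P x₀ z β‖
      ≤ Real.log P ^ (A * n) * σ ^ (-(n : ℝ) / 4) * |z| ^ (-(n : ℝ) / 2) := by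
  have hK := Real.log_pos hP
  have hP0 : 0 < P := by linarith
  have hπ : Real.pi ^ (-(n : ℝ) / 2) ≤ 1 :=
    Real.rpow_le_one_of_one_le_of_nonpos (by linarith [Real.pi_gt_three])
      (by rw [neg_div]; exact neg_nonpos.2 (by positivity))
  rw [Iint_eq_mul_integral_gaussianChirp, norm_mul, Complex.norm_real,
    Real.norm_of_nonneg (by positivity)]
  calc _ ≤ Real.pi ^ (-(n : ℝ) / 2) * Real.log P ^ (A * n) * (σ * z ^ 2) ^ (-(n : ℝ) / 4) := by
        gcongr
        exact norm_integral_gaussianChirp_le hsym hσ0 hσ (by positivity) _ _ _ hz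
    _ ≤ Real.log P ^ (A * n) * (σ * z ^ 2) ^ (-(n : ℝ) / 4) := by
        gcongr
        exact mul_le_of_le_one_left (by positivity) hπ
    _ = Real.log P ^ (A * n) * σ ^ (-(n : ℝ) / 4) * |z| ^ (-(n : ℝ) / 2) := by
        rw [Real.mul_rpow hσ0.le (by positivity), ← sq_abs, ← Real.rpow_natCast,
          ← Real.rpow_mul (abs_nonneg z)]
        ring_nf

lemma norm_Iint_le_log_rpow_mul_rpow (hP : 2 ≤ P) (hA : 0 ≤ A) (Fm : Matrix (Fin n) (Fin n) ℤ)
    (N : ℤ) (x₀ : Fin n → ℝ) (z : ℝ) (β : Fin n → ℝ) :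
    ‖Iint n Fm N A P x₀ z β‖
      ≤ (Real.log 2 ^ (2 * A * n))⁻¹ * Real.log P ^ (2 * A * n) * P ^ (n : ℝ) := by
  calc _ ≤ 1 * P ^ (n : ℝ) :=
        (norm_Iint_le_rpow (by linarith) Fm N x₀ z β).trans_eq (one_mul _).symm
    _ ≤ _ := by
        gcongr
        exact one_le_inv_rpow_mul_rpow (Real.log_pos one_lt_two) (Real.log_le_log two_pos hP)
          (by positivity)

lemma norm_Iint_le_log_rpow_mul_abs_rpow (hP : 2 ≤ P) (hA : 0 ≤ A)
    {Fm : Matrix (Fin n) (Fin n) ℤ} (hsym : ∀ i j, Fm i j = Fm j i) {σ : ℝ} (hσ0 : 0 < σ)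
    (hσ : ∀ h : Fin n → ℝ, σ * ∑ i, h i ^ 2 ≤ ∑ i, (∑ j, (Fm i j : ℝ) * h j) ^ 2)
    (N : ℤ) (x₀ : Fin n → ℝ) {z : ℝ} (hz : z ≠ 0) (β : Fin n → ℝ) :
    ‖Iint n Fm N A P x₀ z β‖ ≤ (Real.log 2 ^ (A * n))⁻¹ * σ ^ (-(n : ℝ) / 4)
      * Real.log P ^ (2 * A * n) * |z| ^ (-(n : ℝ) / 2) := by
  have hP1 : 1 < P := by linarith
  have hbound := norm_Iint_le_abs_rpow (A := A) hP1 hsym hσ0 hσ N x₀ hz β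
  have hK := Real.log_pos hP1
  have hlog := Real.log_le_log two_pos hP
  set K := Real.log P
  have hK2 : K ^ (2 * A * n) = K ^ (A * n) * K ^ (A * n) := by
    rw [← Real.rpow_add hK]
    ring_nf
  calc _ ≤ 1 * (K ^ (A * n) * σ ^ (-(n : ℝ) / 4)) * |z| ^ (-(n : ℝ) / 2) := by
        rwa [one_mul]
    _ ≤ (Real.log 2 ^ (A * n))⁻¹ * K ^ (A * n) * (K ^ (A * n) * σ ^ (-(n : ℝ) / 4))
          * |z| ^ (-(n : ℝ) / 2) := by
        gcongr
        exact one_le_inv_rpow_mul_rpow (Real.log_pos one_lt_two) hlog (by positivity)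
    _ = _ := by
        rw [hK2]
        ring

end Weight

theorem stmt3_general (n : ℕ) (Fm : Matrix (Fin n) (Fin n) ℤ)
    (hsym : ∀ i j, Fm i j = Fm j i) (hdet : Fm.det ≠ 0)
    (A : ℝ) (hA : 0 < A) (C₀ : ℝ) :
    ∃ C > (0 : ℝ), ∀ P : ℝ, 2 ≤ P → ∀ N : ℤ, N ≠ 0 →
      ∀ x₀ : Fin n → ℝ, l2 n x₀ ≤ C₀ → ∀ z : ℝ, ∀ β : Fin n → ℝ,
        ‖Iint n Fm N A P x₀ z β‖
            ≤ C * Real.log P ^ (2 * A * (n : ℝ)) * P ^ (n : ℝ) ∧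
        (z ≠ 0 → ‖Iint n Fm N A P x₀ z β‖
            ≤ C * Real.log P ^ (2 * A * (n : ℝ)) * |z| ^ (-(n : ℝ) / 2)) := by
  obtain ⟨σ, hσ0, hσ⟩ := exists_pos_mul_sum_sq_le_sum_mulVec_sq (M := Fm.map ((↑) : ℤ → ℝ))
    (by rwa [← Int.cast_det, Int.cast_ne_zero])
  simp only [mulVec, dotProduct, map_apply] at hσ
  set C₁ := (Real.log 2 ^ (2 * A * n))⁻¹
  set C₂ := (Real.log 2 ^ (A * n))⁻¹ * σ ^ (-(n : ℝ) / 4)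
  refine ⟨C₁ + C₂, by positivity, fun P hP N _ x₀ _ z β => ?_⟩
  have hK : 0 ≤ Real.log P ^ (2 * A * (n : ℝ)) :=
    Real.rpow_nonneg (Real.log_nonneg (by linarith)) _
  refine ⟨(norm_Iint_le_log_rpow_mul_rpow hP hA.le Fm N x₀ z β).trans ?_,
    fun hz => (norm_Iint_le_log_rpow_mul_abs_rpow hP hA.le hsym hσ0 hσ N x₀ hz β).trans ?_⟩
  · gcongr
    exact le_add_of_nonneg_right (by positivity)
  · gcongr
    exact le_add_of_nonneg_left (by positivity)

theorem stmt3 (n : ℕ) (hn : 4 ≤ n) (Fm : Matrix (Fin n) (Fin n) ℤ)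
    (hsym : ∀ i j, Fm i j = Fm j i) (heven : ∀ i, Even (Fm i i)) (hdet : Fm.det ≠ 0)
    (A : ℝ) (hA : 0 < A) (C₀ : ℝ) (hC₀ : 0 < C₀) :
    ∃ C > (0 : ℝ), ∀ P : ℝ, 2 ≤ P → ∀ N : ℤ, N ≠ 0 →
      ∀ x₀ : Fin n → ℝ, l2 n x₀ ≤ C₀ → ∀ z : ℝ, ∀ β : Fin n → ℝ,
        ‖Iint n Fm N A P x₀ z β‖
            ≤ C * Real.log P ^ (2 * A * (n : ℝ)) * P ^ (n : ℝ) ∧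
        (z ≠ 0 → ‖Iint n Fm N A P x₀ z β‖
            ≤ C * Real.log P ^ (2 * A * (n : ℝ)) * |z| ^ (-(n : ℝ) / 2)) :=
  stmt3_general n Fm hsym hdet A hA C₀
end

section
/- The complete exponential sum satisfies the uniform bound S_u(q,b,N) ≪ q^{n/2+1} for all q ≥ 1, u ∈ ℤ, b ∈ ℤⁿ and non-zero integers N, with implied constant depending only on F. -/
open scoped BigOperators
open MeasureTheory

/-!
Choose `A` with `A + Aᵀ = 𝓕` (upper triangular, with half the even diagonal of `𝓕`), so that
`F(x) = xᵀAx` on `ℤⁿ`. Then the inner sum over `v` is a quadratic Gauss sum modulo `q` with the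
unit `s̄` in front. Squaring it and substituting `v = w + h` leaves, for each `h`, a linear
character sum in `w`, which vanishes unless `𝓕h ≡ 0 mod q`; multiplying by the adjugate, such `h`
satisfy `(det 𝓕) h ≡ 0`, so there are at most `|det 𝓕|ⁿ` of them. Each inner sum is therefore at
most `(q |det 𝓕|)^{n/2}`, and there are at most `q` values of `s`.
-/

open Finset Matrix

lemma AddChar.map_sum_eq_prod {A M ι : Type*} [AddCommMonoid A] [CommMonoid M]
    (ψ : AddChar A M) (s : Finset ι) (f : ι → A) : ψ (∑ i ∈ s, f i) = ∏ i ∈ s, ψ (f i) :=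
  map_prod ψ.toMonoidHom (fun i => Multiplicative.ofAdd (f i)) s

lemma add_dotProduct_mulVec_add {R ι : Type*} [CommRing R] [Fintype ι] (A : Matrix ι ι R)
    (w h : ι → R) :
    (w + h) ⬝ᵥ A *ᵥ (w + h) = w ⬝ᵥ A *ᵥ w + h ⬝ᵥ A *ᵥ h + w ⬝ᵥ (A + Aᵀ) *ᵥ h := by
  have hswap : h ⬝ᵥ A *ᵥ w = w ⬝ᵥ Aᵀ *ᵥ h := by
    rw [dotProduct_mulVec, ← mulVec_transpose, dotProduct_comm]
  rw [mulVec_add, add_dotProduct, dotProduct_add, dotProduct_add, add_mulVec, dotProduct_add,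
    hswap]
  ring

section GaussSum

variable {R ι : Type*} [CommRing R] [Fintype R] [DecidableEq R] [Fintype ι] [DecidableEq ι]

lemma sum_addChar_dotProduct {ψ : AddChar R ℂ} (hψ : ψ.IsPrimitive) (y : ι → R) :
    ∑ w : ι → R, ψ (w ⬝ᵥ y) = if y = 0 then (Fintype.card R : ℂ) ^ Fintype.card ι else 0 := by
  simp_rw [dotProduct, AddChar.map_sum_eq_prod]
  rw [← Fintype.prod_sum (fun i x => ψ (x * y i))]
  simp_rw [AddChar.sum_mulShift _ hψ]
  split_ifs with hy
  · simp [hy]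
  · obtain ⟨i, hi⟩ := Function.ne_iff.1 hy
    exact prod_eq_zero (mem_univ i) (by simp [show y i ≠ 0 from hi])

lemma norm_sum_addChar_quadratic_sq_le {ψ : AddChar R ℂ} (hψ : ψ.IsPrimitive)
    (A : Matrix ι ι R) (b : ι → R) :
    ‖∑ v, ψ (v ⬝ᵥ A *ᵥ v + b ⬝ᵥ v)‖ ^ 2 ≤
      (Fintype.card R : ℝ) ^ Fintype.card ι * #{h | (A + Aᵀ) *ᵥ h = 0} := by
  set φ : (ι → R) → R := fun v => v ⬝ᵥ A *ᵥ v + b ⬝ᵥ v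
  have hφ : ∀ w h, φ (w + h) - φ w = φ h + w ⬝ᵥ (A + Aᵀ) *ᵥ h := fun w h => by
    simp only [φ, add_dotProduct_mulVec_add, dotProduct_add]; ring
  have hnormSq : (‖∑ v, ψ (φ v)‖ ^ 2 : ℂ) = ∑ h, ψ (φ h) *
      if (A + Aᵀ) *ᵥ h = 0 then (Fintype.card R : ℂ) ^ Fintype.card ι else 0 := by
    calc (‖∑ v, ψ (φ v)‖ ^ 2 : ℂ) = ∑ v, ∑ w, ψ (φ v - φ w) := by
          simp_rw [← Complex.mul_conj', map_sum, ← AddChar.map_neg_eq_conj, sum_mul_sum,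
            ← AddChar.map_add_eq_mul, sub_eq_add_neg]
      _ = ∑ w, ∑ h, ψ (φ (w + h) - φ w) := by
          rw [sum_comm]
          exact sum_congr rfl fun w _ => (Equiv.sum_comp (Equiv.addLeft w) _).symm
      _ = ∑ h, ψ (φ h) * ∑ w, ψ (w ⬝ᵥ (A + Aᵀ) *ᵥ h) := by
          rw [sum_comm]
          simp_rw [hφ, AddChar.map_add_eq_mul, mul_sum]
      _ = _ := by simp_rw [sum_addChar_dotProduct hψ]
  calc ‖∑ v, ψ (φ v)‖ ^ 2 = ‖(‖∑ v, ψ (φ v)‖ ^ 2 : ℂ)‖ := by norm_cast; simp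
    _ ≤ ∑ h, ‖ψ (φ h) *
          if (A + Aᵀ) *ᵥ h = 0 then (Fintype.card R : ℂ) ^ Fintype.card ι else 0‖ := by
        rw [hnormSq]; exact norm_sum_le _ _
    _ = ∑ h, if (A + Aᵀ) *ᵥ h = 0 then (Fintype.card R : ℝ) ^ Fintype.card ι else 0 := by
        refine sum_congr rfl fun h _ => ?_
        rw [norm_mul, AddChar.norm_apply, one_mul]
        split_ifs <;> simp
    _ = _ := by rw [← sum_filter, sum_const, nsmul_eq_mul, mul_comm]

lemma card_mulVec_eq_zero_le (M : Matrix ι ι R) :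
    #{h : ι → R | M *ᵥ h = 0} ≤ #{x : R | M.det * x = 0} ^ Fintype.card ι := by
  have hsub : ({h : ι → R | M *ᵥ h = 0} : Finset _) ⊆
      Fintype.piFinset fun _ => {x : R | M.det * x = 0} := by
    intro h hh
    have hdet : M.det • h = 0 := by
      rw [← one_mulVec h, ← smul_mulVec, ← adjugate_mul, ← mulVec_mulVec,
        (mem_filter.1 hh).2, mulVec_zero]
    simpa [Fintype.mem_piFinset] using fun i => congrFun hdet i
  simpa using card_le_card hsub

end GaussSum

section ZModGaussSum

variable {ι : Type*} [Fintype ι] [DecidableEq ι] (q : ℕ) [NeZero q]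

lemma ZMod.card_intCast_mul_eq_zero_le {d : ℤ} (hd : d ≠ 0) :
    #{x : ZMod q | (d : ZMod q) * x = 0} ≤ d.natAbs := by
  have h := IsAddCyclic.card_nsmul_eq_zero_le (α := ZMod q) (Int.natAbs_pos.2 hd)
  convert h using 3 with x
  rw [← zsmul_eq_mul, natAbs_nsmul_eq_zero]

lemma card_map_intCast_mulVec_eq_zero_le (M : Matrix ι ι ℤ) (hM : M.det ≠ 0) :
    #{h : ι → ZMod q | M.map (↑) *ᵥ h = 0} ≤ M.det.natAbs ^ Fintype.card ι := by
  refine (card_mulVec_eq_zero_le _).trans (Nat.pow_le_pow_left ?_ _)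
  have hdet : (M.map (↑)).det = (M.det : ZMod q) := ((Int.castRingHom (ZMod q)).map_det M).symm
  rw [hdet]
  exact ZMod.card_intCast_mul_eq_zero_le q hM

lemma norm_sum_stdAddChar_quadratic_le (A : Matrix ι ι ℤ) (hdet : (A + Aᵀ).det ≠ 0)
    {a : ZMod q} (ha : IsUnit a) (c : ι → ZMod q) :
    ‖∑ w, ZMod.stdAddChar (w ⬝ᵥ (a • A.map (↑)) *ᵥ w + c ⬝ᵥ w)‖ ≤
      ((q : ℝ) * (A + Aᵀ).det.natAbs) ^ ((Fintype.card ι : ℝ) / 2) := by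
  have hker : #{h : ι → ZMod q | (a • A.map (↑) + (a • A.map (↑))ᵀ) *ᵥ h = 0}
      = #{h : ι → ZMod q | (A + Aᵀ).map (↑) *ᵥ h = 0} := by
    refine congrArg card (filter_congr fun h _ => ?_)
    rw [transpose_smul, ← smul_add, smul_mulVec, ha.smul_eq_zero, ← transpose_map,
      ← Matrix.map_add _ Int.cast_add]
  have hsq := norm_sum_addChar_quadratic_sq_le (ZMod.isPrimitive_stdAddChar q) (a • A.map (↑)) c
  rw [hker, ZMod.card] at hsq
  have hcard : (#{h : ι → ZMod q | (A + Aᵀ).map (↑) *ᵥ h = 0} : ℝ)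
      ≤ ((A + Aᵀ).det.natAbs : ℝ) ^ Fintype.card ι := by
    exact_mod_cast card_map_intCast_mulVec_eq_zero_le q (A + Aᵀ) hdet
  refine (pow_le_pow_iff_left₀ (norm_nonneg _) (by positivity) two_ne_zero).1 ?_
  calc _ ≤ (q : ℝ) ^ Fintype.card ι * ((A + Aᵀ).det.natAbs : ℝ) ^ Fintype.card ι :=
        hsq.trans (by gcongr)
    _ = _ := by
        rw [← mul_pow, ← Real.rpow_natCast, ← Real.rpow_natCast, ← Real.rpow_mul (by positivity)]
        norm_num

end ZModGaussSum

lemma exists_add_transpose_eq {ι R : Type*} [LinearOrder ι] [AddCommMonoid R]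
    (M : Matrix ι ι R) (hsym : ∀ i j, M i j = M j i) (heven : ∀ i, Even (M i i)) :
    ∃ A : Matrix ι ι R, A + Aᵀ = M := by
  choose g hg using heven
  refine ⟨Matrix.of fun i j => if i < j then M i j else if i = j then g i else 0, ?_⟩
  ext i j
  rcases lt_trichotomy i j with h | rfl | h
  · simp [h, h.not_gt, h.ne']
  · simp [hg]
  · simp [h, h.not_gt, h.ne', hsym i j]

lemma Qform_intCast {n : ℕ} {Fm A : Matrix (Fin n) (Fin n) ℤ} (hA : A + Aᵀ = Fm)
    (x : Fin n → ℤ) : Qform n Fm (fun i => (x i : ℝ)) = ((x ⬝ᵥ A *ᵥ x : ℤ) : ℝ) := by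
  subst hA
  have hswap : ∑ i, ∑ j, (A j i : ℝ) * x i * x j = ∑ i, ∑ j, (A i j : ℝ) * x i * x j := by
    rw [sum_comm]; exact sum_congr rfl fun i _ => sum_congr rfl fun j _ => by ring
  have hquad : ((x ⬝ᵥ A *ᵥ x : ℤ) : ℝ) = ∑ i, ∑ j, (A i j : ℝ) * x i * x j := by
    simp only [dotProduct, mulVec, Int.cast_sum, Int.cast_mul, mul_sum]
    exact sum_congr rfl fun i _ => sum_congr rfl fun j _ => by ring
  rw [hquad]
  simp only [Qform, Matrix.add_apply, transpose_apply, Int.cast_add, add_mul, sum_add_distrib,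
    hswap]
  ring

lemma eC_intCast_div (q : ℕ) [NeZero q] (k : ℤ) : eC (k / q) = ZMod.stdAddChar (k : ZMod q) := by
  rw [ZMod.stdAddChar_coe, eC]
  push_cast
  ring_nf

lemma sum_pi_fin_natCast {M ι : Type*} [AddCommMonoid M] [Fintype ι] [DecidableEq ι]
    (q : ℕ) [NeZero q] (f : (ι → ZMod q) → M) :
    ∑ v : ι → Fin q, f (fun i => ((v i : ℕ) : ZMod q)) = ∑ w, f w := by
  refine Fintype.sum_equiv (Equiv.piCongrRight fun _ => (ZMod.finEquiv q).toEquiv) _ _ fun v => ?_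
  obtain ⟨k, rfl⟩ := Nat.exists_eq_add_one_of_ne_zero (NeZero.ne q)
  congr 1
  ext i
  exact Fin.cast_val_eq_self (v i)

lemma eC_expSum_summand_eq {n : ℕ} {Fm A : Matrix (Fin n) (Fin n) ℤ} (hA : A + Aᵀ = Fm)
    (q : ℕ) [NeZero q] (N u : ℤ) (b : Fin n → ℤ) (s : ℕ) (a : ZMod q) (x : Fin n → ℕ) :
    eC (((a.val : ℝ) * (Qform n Fm (fun i => (x i : ℝ)) - N) + u * s - ∑ i, (b i : ℝ) * x i) / q)
      = ZMod.stdAddChar (u * s - a * N : ZMod q) *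
        ZMod.stdAddChar ((fun i => (x i : ZMod q)) ⬝ᵥ (a • A.map (↑)) *ᵥ (fun i => (x i : ZMod q))
          + (-fun i => (b i : ZMod q)) ⬝ᵥ (fun i => (x i : ZMod q))) := by
  set X : Fin n → ℤ := fun i => x i
  have hQ : Qform n Fm (fun i => (x i : ℝ)) = ((X ⬝ᵥ A *ᵥ X : ℤ) : ℝ) := by
    simpa [X] using Qform_intCast hA X
  set K : ℤ := a.val * (X ⬝ᵥ A *ᵥ X - N) + u * s - ∑ i, b i * X i
  have harg : ((a.val : ℝ) * (Qform n Fm (fun i => (x i : ℝ)) - N) + u * s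
      - ∑ i, (b i : ℝ) * x i) / q = (K : ℝ) / q := by
    simp only [K, X, hQ]; push_cast; ring
  have hK : (K : ZMod q) = a * ((fun i => (x i : ZMod q)) ⬝ᵥ A.map (↑) *ᵥ (fun i => (x i : ZMod q))
      - N) + u * s - (fun i => (b i : ZMod q)) ⬝ᵥ (fun i => (x i : ZMod q)) := by
    simp [K, X, dotProduct, mulVec]
  rw [harg, eC_intCast_div, ← AddChar.map_add_eq_mul, hK, smul_mulVec, dotProduct_smul,
    smul_eq_mul, neg_dotProduct]
  congr 1
  ring

lemma expSum_eq_sum_stdAddChar {n : ℕ} {Fm A : Matrix (Fin n) (Fin n) ℤ} (hA : A + Aᵀ = Fm)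
    (N : ℤ) (q : ℕ) [NeZero q] (u : ℤ) (b : Fin n → ℤ) :
    expSum n Fm N q u b = ∑ s ∈ (Icc 1 q).filter (fun s => s.Coprime q),
      ZMod.stdAddChar (u * s - (s : ZMod q)⁻¹ * N : ZMod q) *
        ∑ w : Fin n → ZMod q, ZMod.stdAddChar
          (w ⬝ᵥ ((s : ZMod q)⁻¹ • A.map (↑)) *ᵥ w + (-fun i => (b i : ZMod q)) ⬝ᵥ w) := by
  unfold expSum
  refine sum_congr rfl fun s _ => ?_
  rw [mul_sum, ← sum_pi_fin_natCast q]
  exact sum_congr rfl fun v _ => eC_expSum_summand_eq hA q N u b s _ fun i => v i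

theorem stmt6_general (n : ℕ) (Fm : Matrix (Fin n) (Fin n) ℤ)
    (hsym : ∀ i j, Fm i j = Fm j i) (heven : ∀ i, Even (Fm i i)) (hdet : Fm.det ≠ 0) :
    ∃ C > (0 : ℝ), ∀ q : ℕ, 1 ≤ q → ∀ u : ℤ, ∀ b : Fin n → ℤ, ∀ N : ℤ, N ≠ 0 →
      ‖expSum n Fm N q u b‖ ≤ C * (q : ℝ) ^ ((n : ℝ) / 2 + 1) := by
  obtain ⟨A, hA⟩ := exists_add_transpose_eq Fm hsym heven
  have hd : (0 : ℝ) < Fm.det.natAbs := by exact_mod_cast Int.natAbs_pos.2 hdet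
  refine ⟨(Fm.det.natAbs : ℝ) ^ ((n : ℝ) / 2), Real.rpow_pos_of_pos hd _,
    fun q hq u b N _ => ?_⟩
  have : NeZero q := ⟨by omega⟩
  have hcard : #((Icc 1 q).filter fun s => s.Coprime q) ≤ q :=
    (card_filter_le _ _).trans (by simp)
  rw [expSum_eq_sum_stdAddChar hA]
  calc _ ≤ ∑ s ∈ (Icc 1 q).filter (fun s => s.Coprime q),
        ((q : ℝ) * Fm.det.natAbs) ^ ((n : ℝ) / 2) := by
        refine norm_sum_le_of_le _ fun s hs => ?_
        have hunit : IsUnit (s : ZMod q)⁻¹ :=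
          .of_mul_eq_one_right _ (ZMod.coe_mul_inv_eq_one s (mem_filter.1 hs).2)
        rw [norm_mul, AddChar.norm_apply, one_mul]
        have h := norm_sum_stdAddChar_quadratic_le q A (hA ▸ hdet) hunit (-fun i => (b i : ZMod q))
        rwa [Fintype.card_fin, hA] at h
    _ ≤ q * ((q : ℝ) * Fm.det.natAbs) ^ ((n : ℝ) / 2) := by
        rw [sum_const, nsmul_eq_mul]
        exact mul_le_mul_of_nonneg_right (by exact_mod_cast hcard) (by positivity)
    _ = _ := by
        rw [Real.mul_rpow (by positivity) hd.le, Real.rpow_add_one (by positivity)]; ring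

theorem stmt6 (n : ℕ) (hn : 4 ≤ n) (Fm : Matrix (Fin n) (Fin n) ℤ)
    (hsym : ∀ i j, Fm i j = Fm j i) (heven : ∀ i, Even (Fm i i)) (hdet : Fm.det ≠ 0) :
    ∃ C > (0 : ℝ), ∀ q : ℕ, 1 ≤ q → ∀ u : ℤ, ∀ b : Fin n → ℤ, ∀ N : ℤ, N ≠ 0 →
      ‖expSum n Fm N q u b‖ ≤ C * (q : ℝ) ^ ((n : ℝ) / 2 + 1) :=
  stmt6_general n Fm hsym heven hdet
end
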